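/- For all m, n ≥ 0 with m ≡ n (mod 2): ⟨Pₙ, Pₘ⟩ⁱ = Σ_i q^{−(1/2)(n−i)(n−i+1−2δ_{n≡t}) − (1/2)(m−i)(m−i+1−2δ_{m≡t})} / (∏_{j=1}^{i}(1−q^{−2j}) · ∏_{k=1}^{(n−i)/2}(1−q^{−4k}) · ∏_{l=1}^{(m−i)/2}(1−q^{−4l})), where the sum is over 0 ≤ i ≤ min(m,n) with i ≡ n ≡ m (mod 2); and ⟨Pₙ, Pₘ⟩ⁱ = 0 if m ≢ n (mod 2). -/

import Mathlib

/-!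
Setting: `K = ℚ(q)` is the field of rational functions over `ℚ`; `U⁻ = ℚ(q)[F]` and
`Uⁱ = ℚ(q)[B]` are both realized as `Polynomial K`, with `F` resp. `B` the variable
`Polynomial.X`.
-/

noncomputable section

abbrev K : Type := RatFunc ℚ

/-- The variable `q` of `ℚ(q)`. -/
def q : K := RatFunc.X

/-- The quantum integer `[n] = (qⁿ - q⁻ⁿ)/(q - q⁻¹)`. -/
def qint (n : ℕ) : K := (q ^ n - q⁻¹ ^ n) / (q - q⁻¹)

/-- The quantum factorial `[n]! = [1][2]⋯[n]`, `[0]! = 1`. -/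
def qfact : ℕ → K
  | 0 => 1
  | n + 1 => qfact n * qint (n + 1)

/-- The divided power `F⁽ⁿ⁾ = Fⁿ/[n]!` in `U⁻ = ℚ(q)[F]`. -/
def Fdiv (n : ℕ) : Polynomial K := Polynomial.C (qfact n)⁻¹ * Polynomial.X ^ n

/-- The value of `R` on the monomial `Fⁿ = [n]!·F⁽ⁿ⁾`: for `n ≥ 1` it is
`[n]!·(q^{n-1}/(1-q⁻²))·F⁽ⁿ⁻¹⁾`, which corresponds to `R(F⁽ⁿ⁾) = (q^{n-1}/(1-q⁻²))·F⁽ⁿ⁻¹⁾`,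
and `R(1) = 0`. -/
def Rval : ℕ → Polynomial K
  | 0 => 0
  | n + 1 => (qfact (n + 1) * (q ^ n / (1 - q⁻¹ ^ 2))) • Fdiv n

/-- `R : U⁻ → U⁻`, the unique `ℚ(q)`-linear map with `R(1) = 0` and
`R(F⁽ⁿ⁾) = (q^{n-1}/(1-q⁻²))·F⁽ⁿ⁻¹⁾` for `n ≥ 1`; it is defined by linear extension of
`Rval` from the basis of monomials `Fⁿ`. -/
def Rmap : Polynomial K →ₗ[K] Polynomial K :=
  (Polynomial.basisMonomials K).constr K Rval

/-- `j(Bⁿ)`, defined recursively via `j(1) = 1`, `j(B·u) = F·j(u) + R(j(u))`. -/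
def jval : ℕ → Polynomial K
  | 0 => 1
  | n + 1 => Polynomial.X * jval n + Rmap (jval n)

/-- `j : Uⁱ → U⁻`, the unique `ℚ(q)`-linear map with `j(1) = 1` and
`j(B·u) = F·j(u) + R(j(u))` for all `u ∈ Uⁱ`; it is defined by linear extension of `jval`
from the basis of monomials `Bⁿ`. -/
def jmap : Polynomial K →ₗ[K] Polynomial K :=
  (Polynomial.basisMonomials K).constr K jval

/-- `∏_{k=1}^{n} (1 - q^{-2k})`. -/
def lusztigDenom (n : ℕ) : K := ∏ k ∈ Finset.range n, (1 - q⁻¹ ^ (2 * (k + 1)))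

/-- Lusztig's form `(·,·)⁻` on `U⁻`: the symmetric `ℚ(q)`-bilinear form determined by
`(F⁽ᵐ⁾, F⁽ⁿ⁾)⁻ = δ_{m,n}/((1-q⁻²)(1-q⁻⁴)⋯(1-q⁻²ⁿ))`, i.e. on monomials
`(Fᵐ, Fⁿ)⁻ = δ_{m,n}·[n]!²/((1-q⁻²)⋯(1-q⁻²ⁿ))`, extended bilinearly via coefficients. -/
def formMinus (p r : Polynomial K) : K :=
  p.sum fun n a => a * r.coeff n * (qfact n ^ 2 / lusztigDenom n)

/-- The ı-form on `Uⁱ`: `⟨u₁, u₂⟩ⁱ := (j(u₁), j(u₂))⁻`. -/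
def iform (u₁ u₂ : Polynomial K) : K := formMinus (jmap u₁) (jmap u₂)

/-- The ı-canonical basis elements `Pₙ ∈ Uⁱ` (for the parameter `t ∈ {0,1}`): `P₀ = 1` and
`[n+1]·P_{n+1} = B·Pₙ − δ_{n≡t}·[n]·P_{n−1}` for `n ≥ 0`, interpreting `P₋₁ = 0`
(for `n = 0` the last term vanishes as `[0] = 0`). -/
def Pel (t : ℕ) : ℕ → Polynomial K
  | 0 => 1
  | 1 => (qint 1)⁻¹ • (Polynomial.X : Polynomial K)
  | n + 2 => (qint (n + 2))⁻¹ •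
      (Polynomial.X * Pel t (n + 1) -
        (if (n + 1) % 2 = t % 2 then qint (n + 1) else 0) • Pel t n)

lemma q_ne_zero : (q : K) ≠ 0 := RatFunc.X_ne_zero

lemma q_pow_ne_one {k : ℕ} (hk : k ≠ 0) : (q : K) ^ k ≠ 1 := by
  intro h
  have h2 : (algebraMap (Polynomial ℚ) K) (Polynomial.X ^ k) =
      (algebraMap (Polynomial ℚ) K) 1 := by
    rw [map_pow, map_one, RatFunc.algebraMap_X]
    exact h
  have h3 := IsFractionRing.injective (Polynomial ℚ) K h2
  have h4 := congrArg Polynomial.natDegree h3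
  simp [Polynomial.natDegree_X_pow] at h4
  exact hk h4

lemma one_sub_qinv_pow_ne_zero {k : ℕ} (hk : k ≠ 0) : (1 : K) - q⁻¹ ^ k ≠ 0 := by
  rw [sub_ne_zero]
  intro h
  have : (q : K) ^ k = 1 := by
    rw [inv_pow] at h
    have := congrArg (·⁻¹) h
    simpa using this.symm
  exact q_pow_ne_one hk this

lemma qsub_ne_zero : (q : K) - q⁻¹ ≠ 0 := by
  rw [sub_ne_zero]
  intro h
  have : (q : K) ^ 2 = 1 := by
    rw [pow_two]
    nth_rewrite 2 [h]
    exact mul_inv_cancel₀ q_ne_zero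
  exact q_pow_ne_one (by norm_num) this

lemma qint_ne_zero {k : ℕ} (hk : k ≠ 0) : qint k ≠ 0 := by
  unfold qint
  apply div_ne_zero _ qsub_ne_zero
  rw [sub_ne_zero]
  intro h
  have h1 : (q : K) ^ k * q⁻¹ ^ k = 1 := by
    rw [inv_pow]; exact mul_inv_cancel₀ (pow_ne_zero _ q_ne_zero)
  have h2 : (q : K) ^ (2 * k) = 1 := by
    rw [two_mul, pow_add]
    nth_rewrite 2 [h]
    exact h1
  exact q_pow_ne_one (by omega) h2

lemma qint_zero : qint 0 = 0 := by simp [qint]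

lemma qfact_ne_zero : ∀ n, qfact n ≠ 0
  | 0 => one_ne_zero
  | n + 1 => mul_ne_zero (qfact_ne_zero n) (qint_ne_zero (Nat.succ_ne_zero n))

lemma lusztigDenom_ne_zero (n : ℕ) : lusztigDenom n ≠ 0 := by
  unfold lusztigDenom
  exact Finset.prod_ne_zero_iff.mpr fun k _ => one_sub_qinv_pow_ne_zero (by omega)

/-- `∏_{k=1}^{f} (1 - q^{-4k})`. -/
def Pi4 (f : ℕ) : K := ∏ k ∈ Finset.range f, (1 - q⁻¹ ^ (4 * (k + 1)))

lemma Pi4_ne_zero (f : ℕ) : Pi4 f ≠ 0 := by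
  unfold Pi4
  exact Finset.prod_ne_zero_iff.mpr fun k _ => one_sub_qinv_pow_ne_zero (by omega)

lemma jmap_pow (n : ℕ) : jmap (Polynomial.X ^ n) = jval n := by
  have h : (Polynomial.X : Polynomial K) ^ n = (Polynomial.basisMonomials K) n := by
    rw [Polynomial.coe_basisMonomials, Polynomial.X_pow_eq_monomial]
  rw [h, jmap, Module.Basis.constr_basis]

lemma Rmap_pow (n : ℕ) : Rmap (Polynomial.X ^ n) = Rval n := by
  have h : (Polynomial.X : Polynomial K) ^ n = (Polynomial.basisMonomials K) n := by
    rw [Polynomial.coe_basisMonomials, Polynomial.X_pow_eq_monomial]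
  rw [h, Rmap, Module.Basis.constr_basis]

lemma jmap_X_mul (p : Polynomial K) :
    jmap (Polynomial.X * p) = Polynomial.X * jmap p + Rmap (jmap p) := by
  have h : jmap ∘ₗ LinearMap.mulLeft K (Polynomial.X : Polynomial K) =
      LinearMap.mulLeft K (Polynomial.X : Polynomial K) ∘ₗ jmap + Rmap ∘ₗ jmap := by
    apply (Polynomial.basisMonomials K).ext
    intro n
    have hb : (Polynomial.basisMonomials K) n = (Polynomial.X : Polynomial K) ^ n := by
      rw [Polynomial.coe_basisMonomials, Polynomial.X_pow_eq_monomial]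
    simp only [LinearMap.comp_apply, LinearMap.add_apply, LinearMap.mulLeft_apply, hb]
    rw [← pow_succ', jmap_pow, jmap_pow]
    rfl
  exact congrFun (congrArg (fun f => f.toFun) h) p

lemma Fdiv_zero_eq : Fdiv 0 = 1 := by
  simp [Fdiv, qfact]

lemma X_mul_Fdiv (i : ℕ) :
    (Polynomial.X : Polynomial K) * Fdiv i = qint (i + 1) • Fdiv (i + 1) := by
  have h : (qfact i)⁻¹ = qint (i + 1) * (qfact (i + 1))⁻¹ := by
    rw [show qfact (i + 1) = qfact i * qint (i + 1) from rfl, mul_inv]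
    rw [mul_comm (qfact i)⁻¹, ← mul_assoc, mul_inv_cancel₀ (qint_ne_zero (Nat.succ_ne_zero i)),
      one_mul]
  unfold Fdiv
  rw [Polynomial.smul_eq_C_mul, h, map_mul]
  ring

lemma Rmap_Fdiv_zero : Rmap (Fdiv 0) = 0 := by
  rw [Fdiv_zero_eq, show (1 : Polynomial K) = Polynomial.X ^ 0 from (pow_zero _).symm, Rmap_pow]
  rfl

lemma Rmap_Fdiv_succ (e : ℕ) :
    Rmap (Fdiv (e + 1)) = (q ^ e / (1 - q⁻¹ ^ 2)) • Fdiv e := by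
  have h : Fdiv (e + 1) = (qfact (e + 1))⁻¹ • (Polynomial.X : Polynomial K) ^ (e + 1) := by
    rw [Fdiv, Polynomial.smul_eq_C_mul]
  rw [h, map_smul, Rmap_pow, show Rval (e + 1) = (qfact (e + 1) * (q ^ e / (1 - q⁻¹ ^ 2))) • Fdiv e
    from rfl, smul_smul, ← mul_assoc, inv_mul_cancel₀ (qfact_ne_zero (e + 1)), one_mul]

/-- Coefficient of `F⁽ⁱ⁾` in `j(Pₙ)`. -/
def cf (t n i : ℕ) : K :=
  q⁻¹ ^ ((n - i) / 2 * ((n - i) + 1 - 2 * (if n % 2 = t % 2 then 1 else 0))) / Pi4 ((n - i) / 2)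

def g (t n i : ℕ) : K := if i % 2 = n % 2 ∧ i ≤ n then cf t n i else 0

lemma g_eq_zero_of_lt {t n i : ℕ} (h : n < i) : g t n i = 0 := by
  unfold g
  rw [if_neg]
  rintro ⟨-, h2⟩
  omega

lemma cf_eval (t n i f d E : ℕ) (h : n - i = 2 * f)
    (hd : (if n % 2 = t % 2 then (1 : ℕ) else 0) = d)
    (hE : f * (2 * f + 1 - 2 * d) = E) :
    cf t n i = q⁻¹ ^ E / Pi4 f := by
  unfold cf
  rw [h, hd, show 2 * f / 2 = f from by omega, hE]

lemma cf_self (t n : ℕ) : cf t n n = 1 := by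
  unfold cf
  rw [Nat.sub_self]
  norm_num [Pi4]

lemma Pi4_succ (f : ℕ) : Pi4 (f + 1) = Pi4 f * (1 - q⁻¹ ^ (4 * (f + 1))) :=
  Finset.prod_range_succ _ f

lemma qpow_sub_one_ne_zero {k : ℕ} (hk : k ≠ 0) : (q : K) ^ k - 1 ≠ 0 :=
  sub_ne_zero.mpr (q_pow_ne_one hk)

lemma sub_inv_pow_eq (k : ℕ) : (q : K) ^ k - q⁻¹ ^ k = (q ^ (2 * k) - 1) / q ^ k := by
  rw [inv_pow, eq_div_iff (pow_ne_zero _ q_ne_zero), sub_mul,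
    inv_mul_cancel₀ (pow_ne_zero _ q_ne_zero)]
  ring

lemma qsub_eq : (q : K) - q⁻¹ = (q ^ 2 - 1) / q := by
  rw [eq_div_iff q_ne_zero, sub_mul, inv_mul_cancel₀ q_ne_zero]
  ring

lemma one_sub_qinv_pow_eq (k : ℕ) : (1 : K) - q⁻¹ ^ k = (q ^ k - 1) / q ^ k := by
  rw [inv_pow, eq_div_iff (pow_ne_zero _ q_ne_zero), sub_mul,
    inv_mul_cancel₀ (pow_ne_zero _ q_ne_zero)]
  ring

/-- flatten a product of fractions of the first shape -/
lemma flat1 (Q Y Z P X1 : K) (E1 K1 J : ℕ)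
    (h0 : Q ≠ 0) (h2 : Y ≠ 0) (h3 : P ≠ 0) (h4 : Z ≠ 0) :
    X1 * (Q / (Q ^ K1 * Y)) * ((Q ^ E1)⁻¹ / (P * (Z / Q ^ J)))
    = (X1 * Q * Q ^ J) / (Q ^ K1 * Y * Q ^ E1 * P * Z) := by
  have hD : Q ^ K1 * Y * Q ^ E1 * P * Z ≠ 0 := by
    apply_rules [mul_ne_zero, pow_ne_zero]
  rw [eq_div_iff hD]
  field_simp <;> first | (left; ring) | ring

lemma flat2 (Q Y P X1 : K) (E3 : ℕ)
    (h0 : Q ≠ 0) (h2 : Y ≠ 0) (h3 : P ≠ 0) :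
    X1 * (Q ^ 2 / Y) * ((Q ^ E3)⁻¹ / P) = (X1 * Q ^ 2) / (Y * Q ^ E3 * P) := by
  have hD : Y * Q ^ E3 * P ≠ 0 := by
    apply_rules [mul_ne_zero, pow_ne_zero]
  rw [eq_div_iff hD]
  field_simp <;> first | (left; ring) | ring

lemma key_d1 (n i f : ℕ) (hn : n = i + 2 * f) :
    qint (n + 2) * (q⁻¹ ^ ((f + 1) * (2 * (f + 1) + 1 - 2 * 1)) / Pi4 (f + 1))
    = qint i * (q⁻¹ ^ ((f + 1) * (2 * (f + 1) + 1 - 2 * 0)) / Pi4 (f + 1))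
    + (q ^ i / (1 - q⁻¹ ^ 2)) * (q⁻¹ ^ (f * (2 * f + 1 - 2 * 0)) / Pi4 f) := by
  subst hn
  rw [show 2 * (f + 1) + 1 - 2 * 1 = 2 * f + 1 from by omega,
    show 2 * (f + 1) + 1 - 2 * 0 = 2 * f + 3 from by omega,
    show 2 * f + 1 - 2 * 0 = 2 * f + 1 from by omega, Pi4_succ]
  unfold qint
  rw [sub_inv_pow_eq, sub_inv_pow_eq, qsub_eq, one_sub_qinv_pow_eq, one_sub_qinv_pow_eq,
    inv_pow, inv_pow, inv_pow]
  have h0 := q_ne_zero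
  have h2 : (q : K) ^ 2 - 1 ≠ 0 := qpow_sub_one_ne_zero (by norm_num)
  have h3 := Pi4_ne_zero f
  have h4 : (q : K) ^ (4 * (f + 1)) - 1 ≠ 0 := qpow_sub_one_ne_zero (by omega)
  simp only [div_div_eq_mul_div, div_div, div_mul_div_comm, one_div, mul_div_assoc]
  rw [flat1 q _ _ _ _ _ _ _ h0 h2 h3 h4, flat1 q _ _ _ _ _ _ _ h0 h2 h3 h4,
    flat2 q _ _ _ _ h0 h2 h3]
  have hB : (q : K) ^ (i + 2 * f + 2) * (q ^ 2 - 1) * q ^ ((f + 1) * (2 * f + 1)) * Pi4 f *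
      (q ^ (4 * (f + 1)) - 1) ≠ 0 := by
    apply_rules [mul_ne_zero, pow_ne_zero]
  have hD : (q : K) ^ i * (q ^ 2 - 1) * q ^ ((f + 1) * (2 * f + 3)) * Pi4 f *
      (q ^ (4 * (f + 1)) - 1) ≠ 0 := by
    apply_rules [mul_ne_zero, pow_ne_zero]
  have hF : ((q : K) ^ 2 - 1) * q ^ (f * (2 * f + 1)) * Pi4 f ≠ 0 := by
    apply_rules [mul_ne_zero, pow_ne_zero]
  rw [div_add_div _ _ hD hF, div_eq_div_iff hB (mul_ne_zero hD hF)]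
  ring

lemma flat3 (Q Y P X1 : K) (c j : ℕ)
    (h0 : Q ≠ 0) (h2 : Y ≠ 0) (h3 : P ≠ 0) :
    X1 * (Q ^ 2 / Y) * (((Q ^ c) ^ 2)⁻¹ * (Q ^ j / P))
    = (X1 * Q ^ 2 * Q ^ j) / (Y * (Q ^ c) ^ 2 * P) := by
  have hD : Y * (Q ^ c) ^ 2 * P ≠ 0 :=
    mul_ne_zero (mul_ne_zero h2 (pow_ne_zero _ (pow_ne_zero _ h0))) h3
  rw [eq_div_iff hD]
  field_simp <;> first | (left; ring) | ring

lemma flat4 (Q Y P X1 : K) (E K1 : ℕ)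
    (h0 : Q ≠ 0) (h2 : Y ≠ 0) (h3 : P ≠ 0) :
    X1 * (Q / (Q ^ K1 * Y)) * ((Q ^ E)⁻¹ / P) = (X1 * Q) / (Q ^ K1 * Y * Q ^ E * P) := by
  have hD : Q ^ K1 * Y * Q ^ E * P ≠ 0 := by
    apply_rules [mul_ne_zero, pow_ne_zero]
  rw [eq_div_iff hD]
  field_simp <;> first | (left; ring) | ring

lemma qinv_pow_special (f : ℕ) :
    (q : K)⁻¹ ^ (f * (2 * f + 1 - 2 * 1)) = (q⁻¹ ^ (f * f)) ^ 2 * q ^ f := by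
  have hn : f * (2 * f + 1 - 2 * 1) + f = f * f * 2 := by
    rcases f with _ | k
    · rfl
    · rw [show 2 * (k + 1) + 1 - 2 * 1 = 2 * k + 1 from by omega]
      ring
  have h1 : (q : K)⁻¹ ^ (f * (2 * f + 1 - 2 * 1)) * q⁻¹ ^ f = (q⁻¹ ^ (f * f)) ^ 2 := by
    rw [← pow_add, hn, pow_mul]
  have h2q : (q : K)⁻¹ ^ f * q ^ f = 1 := by
    rw [inv_pow]; exact inv_mul_cancel₀ (pow_ne_zero _ q_ne_zero)
  rw [← h1, mul_assoc, h2q]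
  simp

lemma key_d0 (n i f : ℕ) (hn : n = i + 2 * f) :
    qint (n + 2) * (q⁻¹ ^ ((f + 1) * (2 * (f + 1) + 1 - 2 * 0)) / Pi4 (f + 1))
    = qint i * (q⁻¹ ^ ((f + 1) * (2 * (f + 1) + 1 - 2 * 1)) / Pi4 (f + 1))
    + (q ^ i / (1 - q⁻¹ ^ 2)) * (q⁻¹ ^ (f * (2 * f + 1 - 2 * 1)) / Pi4 f)
    - qint (n + 1) * (q⁻¹ ^ (f * (2 * f + 1 - 2 * 0)) / Pi4 f) := by
  subst hn
  rw [show 2 * (f + 1) + 1 - 2 * 1 = 2 * f + 1 from by omega,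
    show 2 * (f + 1) + 1 - 2 * 0 = 2 * f + 3 from by omega, qinv_pow_special,
    show 2 * f + 1 - 2 * 0 = 2 * f + 1 from by omega, Pi4_succ]
  unfold qint
  rw [sub_inv_pow_eq, sub_inv_pow_eq, sub_inv_pow_eq, qsub_eq, one_sub_qinv_pow_eq,
    one_sub_qinv_pow_eq]
  simp only [inv_pow]
  have h0 := q_ne_zero
  have h2 : (q : K) ^ 2 - 1 ≠ 0 := qpow_sub_one_ne_zero (by norm_num)
  have h3 := Pi4_ne_zero f
  have h4 : (q : K) ^ (4 * (f + 1)) - 1 ≠ 0 := qpow_sub_one_ne_zero (by omega)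
  simp only [div_div_eq_mul_div, div_div, div_mul_div_comm, one_div, mul_div_assoc]
  rw [flat1 q _ _ _ _ _ _ _ h0 h2 h3 h4, flat1 q _ _ _ _ _ _ _ h0 h2 h3 h4,
    flat3 q _ _ _ _ _ h0 h2 h3, flat4 q _ _ _ _ _ h0 h2 h3]
  have hB : (q : K) ^ (i + 2 * f + 2) * (q ^ 2 - 1) * q ^ ((f + 1) * (2 * f + 3)) * Pi4 f *
      (q ^ (4 * (f + 1)) - 1) ≠ 0 := by
    apply_rules [mul_ne_zero, pow_ne_zero]
  have hD : (q : K) ^ i * (q ^ 2 - 1) * q ^ ((f + 1) * (2 * f + 1)) * Pi4 f *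
      (q ^ (4 * (f + 1)) - 1) ≠ 0 := by
    apply_rules [mul_ne_zero, pow_ne_zero]
  have hF : ((q : K) ^ 2 - 1) * (q ^ (f * f)) ^ 2 * Pi4 f ≠ 0 :=
    mul_ne_zero (mul_ne_zero h2 (pow_ne_zero _ (pow_ne_zero _ h0))) h3
  have hH : (q : K) ^ (i + 2 * f + 1) * (q ^ 2 - 1) * q ^ (f * (2 * f + 1)) * Pi4 f ≠ 0 := by
    apply_rules [mul_ne_zero, pow_ne_zero]
  rw [div_add_div _ _ hD hF, div_sub_div _ _ (mul_ne_zero hD hF) hH,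
    div_eq_div_iff hB (mul_ne_zero (mul_ne_zero hD hF) hH)]
  ring

lemma scalar_key (t n i : ℕ) :
    qint (n + 2) * g t (n + 2) i
    = qint i * g t (n + 1) (i - 1)
    + (q ^ i / (1 - q⁻¹ ^ 2)) * g t (n + 1) (i + 1)
    - (if (n + 1) % 2 = t % 2 then qint (n + 1) else 0) * g t n i := by
  by_cases hpar : i % 2 = n % 2
  · by_cases hle : i ≤ n + 2
    · by_cases hi2 : i = n + 2
      · subst hi2
        have e1 : g t (n + 2) (n + 2) = 1 := by
          unfold g; rw [if_pos ⟨rfl, le_refl _⟩]; exact cf_self t (n + 2)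
        have e2 : g t (n + 1) (n + 2 - 1) = 1 := by
          rw [show n + 2 - 1 = n + 1 from by omega]
          unfold g; rw [if_pos ⟨rfl, le_refl _⟩]; exact cf_self t (n + 1)
        have e3 : g t (n + 1) (n + 2 + 1) = 0 := g_eq_zero_of_lt (by omega)
        have e4 : g t n (n + 2) = 0 := g_eq_zero_of_lt (by omega)
        rw [e1, e2, e3, e4]
        ring
      · have hin : i ≤ n := by omega
        set f := (n - i) / 2 with hf
        have hn : n = i + 2 * f := by omega
        have c1cond : i % 2 = (n + 2) % 2 ∧ i ≤ n + 2 := ⟨by omega, by omega⟩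
        have c3cond : (i + 1) % 2 = (n + 1) % 2 ∧ i + 1 ≤ n + 1 := ⟨by omega, by omega⟩
        have c4cond : i % 2 = n % 2 ∧ i ≤ n := ⟨hpar, hin⟩
        by_cases hd : n % 2 = t % 2
        · -- δ_n = 1 : use key_d1
          have hc1 : g t (n + 2) i
              = q⁻¹ ^ ((f + 1) * (2 * (f + 1) + 1 - 2 * 1)) / Pi4 (f + 1) := by
            unfold g; rw [if_pos c1cond]
            exact cf_eval t (n + 2) i (f + 1) 1 _ (by omega) (by rw [if_pos (by omega)]) rfl
          have hterm1 : qint i * g t (n + 1) (i - 1)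
              = qint i * (q⁻¹ ^ ((f + 1) * (2 * (f + 1) + 1 - 2 * 0)) / Pi4 (f + 1)) := by
            rcases Nat.eq_zero_or_pos i with hi0 | hi0
            · rw [hi0, qint_zero, zero_mul, zero_mul]
            · congr 1
              unfold g; rw [if_pos ⟨by omega, by omega⟩]
              exact cf_eval t (n + 1) (i - 1) (f + 1) 0 _ (by omega)
                (by rw [if_neg (by omega)]) rfl
          have hterm2 : g t (n + 1) (i + 1)
              = q⁻¹ ^ (f * (2 * f + 1 - 2 * 0)) / Pi4 f := by
            unfold g; rw [if_pos c3cond]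
            exact cf_eval t (n + 1) (i + 1) f 0 _ (by omega) (by rw [if_neg (by omega)]) rfl
          rw [hc1, hterm1, hterm2, if_neg (show ¬ (n + 1) % 2 = t % 2 from by omega),
            zero_mul, sub_zero]
          exact key_d1 n i f hn
        · -- δ_n = 0 : use key_d0
          have hc1 : g t (n + 2) i
              = q⁻¹ ^ ((f + 1) * (2 * (f + 1) + 1 - 2 * 0)) / Pi4 (f + 1) := by
            unfold g; rw [if_pos c1cond]
            exact cf_eval t (n + 2) i (f + 1) 0 _ (by omega) (by rw [if_neg (by omega)]) rfl
          have hterm1 : qint i * g t (n + 1) (i - 1)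
              = qint i * (q⁻¹ ^ ((f + 1) * (2 * (f + 1) + 1 - 2 * 1)) / Pi4 (f + 1)) := by
            rcases Nat.eq_zero_or_pos i with hi0 | hi0
            · rw [hi0, qint_zero, zero_mul, zero_mul]
            · congr 1
              unfold g; rw [if_pos ⟨by omega, by omega⟩]
              exact cf_eval t (n + 1) (i - 1) (f + 1) 1 _ (by omega)
                (by rw [if_pos (by omega)]) rfl
          have hterm2 : g t (n + 1) (i + 1)
              = q⁻¹ ^ (f * (2 * f + 1 - 2 * 1)) / Pi4 f := by
            unfold g; rw [if_pos c3cond]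
            exact cf_eval t (n + 1) (i + 1) f 1 _ (by omega) (by rw [if_pos (by omega)]) rfl
          have hterm3 : g t n i = q⁻¹ ^ (f * (2 * f + 1 - 2 * 0)) / Pi4 f := by
            unfold g; rw [if_pos c4cond]
            exact cf_eval t n i f 0 _ (by omega) (by rw [if_neg hd]) rfl
          rw [hc1, hterm1, hterm2, hterm3, if_pos (show (n + 1) % 2 = t % 2 from by omega)]
          exact key_d0 n i f hn
    · have e1 : g t (n + 2) i = 0 := g_eq_zero_of_lt (by omega)
      have e2 : g t (n + 1) (i - 1) = 0 := g_eq_zero_of_lt (by omega)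
      have e3 : g t (n + 1) (i + 1) = 0 := g_eq_zero_of_lt (by omega)
      have e4 : g t n i = 0 := g_eq_zero_of_lt (by omega)
      rw [e1, e2, e3, e4]
      ring
  · have e1 : g t (n + 2) i = 0 := by
      unfold g; rw [if_neg]; rintro ⟨h, -⟩; omega
    have e3 : g t (n + 1) (i + 1) = 0 := by
      unfold g; rw [if_neg]; rintro ⟨h, -⟩; omega
    have e4 : g t n i = 0 := by
      unfold g; rw [if_neg]; rintro ⟨h, -⟩; omega
    rcases Nat.eq_zero_or_pos i with hi0 | hi0
    · subst hi0
      rw [qint_zero, e1, e3, e4]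
      simp
    · have e2 : g t (n + 1) (i - 1) = 0 := by
        unfold g; rw [if_neg]; rintro ⟨h, -⟩; omega
      rw [e1, e2, e3, e4]
      ring

lemma smul_g_sum (t : ℕ) (c : K) (m N : ℕ) (h : m + 1 ≤ N) :
    c • (∑ i ∈ Finset.range (m + 1), g t m i • Fdiv i)
    = ∑ i ∈ Finset.range N, (c * g t m i) • Fdiv i := by
  have hzero : ∀ x ∈ Finset.range N, x ∉ Finset.range (m + 1) →
      (c * g t m x) • Fdiv x = 0 := by
    intro x _ hx
    rw [Finset.mem_range] at hx
    rw [g_eq_zero_of_lt (by omega), mul_zero, zero_smul]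
  rw [← Finset.sum_subset (Finset.range_subset_range.mpr h) hzero, Finset.smul_sum]
  exact Finset.sum_congr rfl fun i _ => (smul_smul c _ _)

lemma X_mul_g_sum (t m : ℕ) :
    Polynomial.X * (∑ i ∈ Finset.range (m + 1), g t m i • Fdiv i)
    = ∑ i ∈ Finset.range (m + 2), (qint i * g t m (i - 1)) • Fdiv i := by
  rw [Finset.sum_range_succ' (fun i => (qint i * g t m (i - 1)) • Fdiv i) (m + 1)]
  simp only [qint_zero, zero_mul, zero_smul, add_zero]
  rw [Finset.mul_sum]
  refine Finset.sum_congr rfl fun i _ => ?_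
  rw [mul_smul_comm, X_mul_Fdiv, smul_smul, Nat.add_sub_cancel, mul_comm]

lemma Rmap_g_sum (t m N : ℕ) (h : m + 1 ≤ N) :
    Rmap (∑ i ∈ Finset.range (m + 1), g t m i • Fdiv i)
    = ∑ i ∈ Finset.range N, ((q ^ i / (1 - q⁻¹ ^ 2)) * g t m (i + 1)) • Fdiv i := by
  have hzero : ∀ x ∈ Finset.range N, x ∉ Finset.range m →
      ((q ^ x / (1 - q⁻¹ ^ 2)) * g t m (x + 1)) • Fdiv x = 0 := by
    intro x _ hx
    rw [Finset.mem_range] at hx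
    rw [g_eq_zero_of_lt (by omega), mul_zero, zero_smul]
  rw [← Finset.sum_subset (Finset.range_subset_range.mpr (by omega : m ≤ N)) hzero]
  rw [map_sum]
  rw [Finset.sum_range_succ' (fun i => Rmap (g t m i • Fdiv i)) m]
  have h0 : Rmap (g t m 0 • Fdiv 0) = 0 := by
    rw [map_smul, Rmap_Fdiv_zero, smul_zero]
  rw [h0, add_zero]
  refine Finset.sum_congr rfl fun i _ => ?_
  rw [map_smul, Rmap_Fdiv_succ, smul_smul, mul_comm]

lemma step_sum (t n : ℕ) :
    qint (n + 2) • (∑ i ∈ Finset.range (n + 3), g t (n + 2) i • Fdiv i)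
    = Polynomial.X * (∑ i ∈ Finset.range (n + 2), g t (n + 1) i • Fdiv i)
      + Rmap (∑ i ∈ Finset.range (n + 2), g t (n + 1) i • Fdiv i)
      - (if (n + 1) % 2 = t % 2 then qint (n + 1) else 0) •
          (∑ i ∈ Finset.range (n + 1), g t n i • Fdiv i) := by
  rw [smul_g_sum t _ (n + 2) (n + 3) (by omega),
    show n + 2 + 1 = n + 3 from rfl,
    X_mul_g_sum t (n + 1),
    show n + 1 + 2 = n + 3 from rfl,
    Rmap_g_sum t (n + 1) (n + 3) (by omega),
    smul_g_sum t _ n (n + 3) (by omega),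
    ← Finset.sum_add_distrib, ← Finset.sum_sub_distrib]
  refine Finset.sum_congr rfl fun i _ => ?_
  rw [← add_smul, ← sub_smul]
  rw [scalar_key t n i]

lemma qint_one : qint 1 = 1 := by
  unfold qint
  rw [pow_one, pow_one]
  exact div_self qsub_ne_zero

lemma g_self (t n : ℕ) : g t n n = 1 := by
  unfold g
  rw [if_pos ⟨rfl, le_refl _⟩]
  exact cf_self t n

lemma jmap_Pel (t : ℕ) : ∀ n, jmap (Pel t n) = ∑ i ∈ Finset.range (n + 1), g t n i • Fdiv i := by
  intro n
  induction n using Nat.twoStepInduction with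
  | zero =>
    have h1 : jmap (Pel t 0) = 1 := by
      show jmap 1 = 1
      rw [show (1 : Polynomial K) = Polynomial.X ^ 0 from (pow_zero _).symm, jmap_pow]
      rfl
    rw [h1, Finset.sum_range_one, g_self, one_smul, Fdiv_zero_eq]
  | one =>
    have hjv : jval 1 = Polynomial.X := by
      show Polynomial.X * jval 0 + Rmap (jval 0) = Polynomial.X
      show Polynomial.X * 1 + Rmap 1 = Polynomial.X
      rw [mul_one, show (1 : Polynomial K) = Polynomial.X ^ 0 from (pow_zero _).symm, Rmap_pow]
      show Polynomial.X + 0 = Polynomial.X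
      rw [add_zero]
    have hjX := jmap_pow 1
    rw [pow_one] at hjX
    have h1 : jmap (Pel t 1) = Polynomial.X := by
      show jmap ((qint 1)⁻¹ • (Polynomial.X : Polynomial K)) = Polynomial.X
      rw [map_smul, qint_one, inv_one, one_smul, hjX, hjv]
    rw [h1, Finset.sum_range_succ, Finset.sum_range_one, g_self, one_smul]
    have hg0 : g t 1 0 = 0 := by
      unfold g
      rw [if_neg]
      rintro ⟨h, -⟩
      omega
    rw [hg0, zero_smul, zero_add]
    have hf1 : Fdiv 1 = Polynomial.X := by
      unfold Fdiv
      rw [show qfact 1 = qfact 0 * qint 1 from rfl, show qfact 0 = 1 from rfl, qint_one,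
        one_mul, inv_one, map_one, one_mul, pow_one]
    rw [hf1]
  | more n ih ih1 =>
    have hrec : Pel t (n + 2) = (qint (n + 2))⁻¹ •
        (Polynomial.X * Pel t (n + 1) -
          (if (n + 1) % 2 = t % 2 then qint (n + 1) else 0) • Pel t n) := rfl
    have hj : jmap (Pel t (n + 2)) = (qint (n + 2))⁻¹ •
        (jmap (Polynomial.X * Pel t (n + 1)) -
          (if (n + 1) % 2 = t % 2 then qint (n + 1) else 0) • jmap (Pel t n)) := by
      rw [hrec, map_smul, map_sub, map_smul]
    rw [hj, jmap_X_mul, ih1, ih, show n + 1 + 1 = n + 2 from rfl]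
    rw [← step_sum t n, smul_smul, inv_mul_cancel₀ (qint_ne_zero (by omega)), one_smul]

lemma S_coeff (t n k : ℕ) :
    (∑ i ∈ Finset.range (n + 1), g t n i • Fdiv i).coeff k = g t n k * (qfact k)⁻¹ := by
  rw [Polynomial.finset_sum_coeff]
  simp only [Polynomial.coeff_smul, Fdiv, Polynomial.coeff_C_mul, Polynomial.coeff_X_pow,
    smul_eq_mul, mul_ite, mul_one, mul_zero]
  rw [Finset.sum_ite_eq (Finset.range (n + 1)) k (fun i => g t n i * (qfact i)⁻¹)]
  by_cases hk : k ∈ Finset.range (n + 1)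
  · rw [if_pos hk]
  · rw [if_neg hk]
    rw [Finset.mem_range] at hk
    rw [g_eq_zero_of_lt (by omega), zero_mul]

lemma S_natDegree (t n : ℕ) :
    (∑ i ∈ Finset.range (n + 1), g t n i • Fdiv i).natDegree ≤ n := by
  apply Polynomial.natDegree_sum_le_of_forall_le
  intro i hi
  rw [Finset.mem_range] at hi
  refine (Polynomial.natDegree_smul_le _ _).trans ?_
  refine (Polynomial.natDegree_C_mul_le _ _).trans ?_
  rw [Polynomial.natDegree_X_pow]
  omega

lemma iform_eq (t m n : ℕ) :
    iform (Pel t n) (Pel t m)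
    = ∑ k ∈ Finset.range (max m n + 1), g t n k * g t m k / lusztigDenom k := by
  unfold iform formMinus
  rw [jmap_Pel t n, jmap_Pel t m]
  rw [Polynomial.sum_over_range' _ (fun k => by rw [zero_mul, zero_mul]) (max m n + 1)
    (by have := S_natDegree t n; omega)]
  refine Finset.sum_congr rfl fun k _ => ?_
  rw [S_coeff, S_coeff]
  have hf := qfact_ne_zero k
  have h1 : qfact k ^ 2 * (qfact k)⁻¹ ^ 2 = 1 := by
    rw [← mul_pow, mul_inv_cancel₀ hf, one_pow]
  field_simp

/-- for `m ≡ n (mod 2)`,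
`⟨Pₙ, Pₘ⟩ⁱ = Σ_i q^{−(1/2)(n−i)(n−i+1−2δ_{n≡t}) − (1/2)(m−i)(m−i+1−2δ_{m≡t})}
/ (∏_{j=1}^{i}(1−q^{−2j})·∏_{k=1}^{(n−i)/2}(1−q^{−4k})·∏_{l=1}^{(m−i)/2}(1−q^{−4l}))`,
the sum over `0 ≤ i ≤ min(m,n)` with `i ≡ n ≡ m (mod 2)`; and `⟨Pₙ, Pₘ⟩ⁱ = 0` if
`m ≢ n (mod 2)`.  (On the summation set `n−i` and `m−i` are even, the exponent is `≤ 0`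
and is written as the corresponding power of `q⁻¹`: `(1/2)(n−i)(n−i+1−2δ) =
((n−i)/2)·((n−i)+1−2δ)`; natural subtraction only truncates when `n−i = 0`, where the
factor `(n−i)/2 = 0` anyway.) -/
theorem stmt14 (t : ℕ) (ht : t = 0 ∨ t = 1) (m n : ℕ) :
    (n % 2 = m % 2 →
      iform (Pel t n) (Pel t m) =
        ∑ i ∈ (Finset.range (min m n + 1)).filter (fun i => i % 2 = n % 2),
          q⁻¹ ^ ((n - i) / 2 * ((n - i) + 1 - 2 * (if n % 2 = t % 2 then 1 else 0)) +
              (m - i) / 2 * ((m - i) + 1 - 2 * (if m % 2 = t % 2 then 1 else 0))) /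
            ((∏ j ∈ Finset.range i, (1 - q⁻¹ ^ (2 * (j + 1)))) *
              (∏ k ∈ Finset.range ((n - i) / 2), (1 - q⁻¹ ^ (4 * (k + 1)))) *
              (∏ l ∈ Finset.range ((m - i) / 2), (1 - q⁻¹ ^ (4 * (l + 1)))))) ∧
    (n % 2 ≠ m % 2 → iform (Pel t n) (Pel t m) = 0) := by
  constructor
  · intro hnm
    rw [iform_eq]
    have hsub : (Finset.range (min m n + 1)).filter (fun i => i % 2 = n % 2) ⊆
        Finset.range (max m n + 1) := by
      intro x hx
      rw [Finset.mem_filter, Finset.mem_range] at hx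
      rw [Finset.mem_range]
      omega
    have hvanish : ∀ x ∈ Finset.range (max m n + 1),
        x ∉ (Finset.range (min m n + 1)).filter (fun i => i % 2 = n % 2) →
        g t n x * g t m x / lusztigDenom x = 0 := by
      intro x _ hxn
      rw [Finset.mem_filter, Finset.mem_range] at hxn
      by_cases hp : x % 2 = n % 2
      · have hxm : min m n + 1 ≤ x := by
          by_contra h
          exact hxn ⟨by omega, hp⟩
        rcases le_or_gt x n with h1 | h1
        · rw [g_eq_zero_of_lt (show m < x from by omega), mul_zero, zero_div]
        · rw [g_eq_zero_of_lt h1, zero_mul, zero_div]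
      · have hz : g t n x = 0 := by
          unfold g; rw [if_neg]; rintro ⟨h, -⟩; exact hp h
        rw [hz, zero_mul, zero_div]
    rw [← Finset.sum_subset hsub hvanish]
    refine Finset.sum_congr rfl fun k hk => ?_
    rw [Finset.mem_filter, Finset.mem_range] at hk
    have hk2 : k % 2 = n % 2 := hk.2
    have hgn : g t n k = cf t n k := by
      unfold g; rw [if_pos ⟨hk2, by omega⟩]
    have hgm : g t m k = cf t m k := by
      unfold g; rw [if_pos ⟨by omega, by omega⟩]
    rw [hgn, hgm]
    unfold cf Pi4 lusztigDenom
    rw [pow_add]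
    ring
  · intro hnm
    rw [iform_eq]
    apply Finset.sum_eq_zero
    intro k _
    by_cases hp : k % 2 = n % 2
    · have hz : g t m k = 0 := by
        unfold g; rw [if_neg]; rintro ⟨h, -⟩; omega
      rw [hz, mul_zero, zero_div]
    · have hz : g t n k = 0 := by
        unfold g; rw [if_neg]; rintro ⟨h, -⟩; exact hp h
      rw [hz, zero_mul, zero_div]

end
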